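/- Let $n\ge 3$, let $\xi_F\in\mathbb{R}$, $\eta_F\in\mathbb{R}^{n-1}$ with $\eta_F\ne 0$, and let $T$ be a symmetric 4-tensor on $\mathbb{R}^{n-1}$. Suppose that for all unit vectors $\hat Y\in\mathbb{R}^{n-1}$, $\big\langle \big((\xi_F^2+1)^{-1}(\hat Y\cdot\eta_F)\,\eta_F+\hat Y\big)^{\otimes 4}, T\big\rangle = 0$. Then $T=0$. -/

import Mathlib

/-!
The map `L Y = (ξ_F² + 1)⁻¹ ⟪Y, η_F⟫ η_F + Y` is invertible, since pairing `L Y` with `η_F`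
multiplies `⟪Y, η_F⟫` by `1 + ‖η_F‖² / (ξ_F² + 1) > 0`. By homogeneity the hypothesis therefore
says that `T (v, v, v, v) = 0` for every `v`. Differentiating `t ↦ T (v + t w, …, v + t w)`
at `t = 0` (algebraically: reading off the coefficient of `t` in this polynomial) and using
symmetry gives `T (w, v, v, v) = 0`, so `T w` is a symmetric 3-tensor with vanishing diagonal,
and induction on the degree shows `T = 0`.
-/

open RealInnerProductSpace Finset Polynomial

theorem Fin.cons_comp_decomposeFin_symm {k : ℕ} {α : Type*} (w : α) (x : Fin k → α)
    (σ : Equiv.Perm (Fin k)) :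
    Fin.cons w x ∘ Equiv.Perm.decomposeFin.symm (0, σ) = Fin.cons w (x ∘ σ) := by
  ext j
  cases j using Fin.cases <;> simp [Equiv.Perm.decomposeFin_symm_apply_succ]

namespace MultilinearMap

section Expansion

variable {R ι E M : Type*} [CommSemiring R] [AddCommMonoid E] [Module R E] [AddCommMonoid M]
  [Module R M] [Fintype ι] [DecidableEq ι]

theorem map_const_smul_add (T : MultilinearMap R (fun _ : ι => E) M) (t : R) (v w : E) :
    T (fun _ => t • w + v) =
      ∑ s : Finset ι, t ^ #s • T (s.piecewise (fun _ => w) fun _ => v) := by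
  rw [show (fun _ => t • w + v) = (fun _ : ι => t • w) + fun _ => v from rfl, map_add_univ]
  refine sum_congr rfl fun s _ => ?_
  rw [← prod_const, ← T.map_piecewise_smul]
  congr 1
  ext i
  by_cases hi : i ∈ s <;> simp [hi]

end Expansion

section Polarization

variable {𝕜 ι E : Type*} [Field 𝕜] [AddCommGroup E] [Module 𝕜 E] [Fintype ι] [DecidableEq ι]

theorem sum_map_update_eq_zero [Infinite 𝕜] (T : MultilinearMap 𝕜 (fun _ : ι => E) 𝕜)
    (hdiag : ∀ v, T (fun _ => v) = 0) (v w : E) :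
    ∑ i, T (Function.update (fun _ => v) i w) = 0 := by
  set P : 𝕜[X] := ∑ s : Finset ι, C (T (s.piecewise (fun _ => w) fun _ => v)) * X ^ #s
  have hP : P = 0 := Polynomial.funext fun t => by
    rw [eval_zero, ← hdiag (t • w + v), T.map_const_smul_add, eval_finsetSum]
    simp only [eval_mul, eval_C, eval_pow, eval_X, smul_eq_mul]
    exact sum_congr rfl fun s _ => mul_comm _ _
  have hcoeff := congrArg (coeff · 1) hP
  simp only [P, finsetSum_coeff, coeff_C_mul_X_pow, coeff_zero] at hcoeff
  rw [← sum_filter] at hcoeff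
  simp_rw [eq_comm (a := 1), univ_filter_card_eq, powersetCard_one] at hcoeff
  simpa [piecewise_singleton] using hcoeff

theorem map_update_const_eq_zero [CharZero 𝕜] (T : MultilinearMap 𝕜 (fun _ : ι => E) 𝕜)
    (hsym : ∀ (σ : Equiv.Perm ι) (x : ι → E), T (x ∘ σ) = T x)
    (hdiag : ∀ v, T (fun _ => v) = 0) (i₀ : ι) (v w : E) :
    T (Function.update (fun _ => v) i₀ w) = 0 := by
  have hswap (i : ι) :
      T (Function.update (fun _ => v) i w) = T (Function.update (fun _ => v) i₀ w) := by
    rw [← hsym (Equiv.swap i₀ i), Function.update_comp_equiv, Equiv.symm_swap,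
      Equiv.swap_apply_right]
    rfl
  have hsum := T.sum_map_update_eq_zero hdiag v w
  simp only [hswap, sum_const, card_univ, nsmul_eq_mul] at hsum
  exact (mul_eq_zero.mp hsum).resolve_left
    (Nat.cast_ne_zero.mpr (Fintype.card_pos_iff.mpr ⟨i₀⟩).ne')

theorem eq_zero_of_symm_of_diag [CharZero 𝕜] :
    ∀ {k : ℕ} (T : MultilinearMap 𝕜 (fun _ : Fin k => E) 𝕜),
    (∀ (σ : Equiv.Perm (Fin k)) (x : Fin k → E), T (x ∘ σ) = T x) →
    (∀ v, T (fun _ => v) = 0) → T = 0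
  | 0, T, _, hdiag => by
    ext x
    rw [Subsingleton.elim x fun _ => 0]
    exact hdiag 0
  | k + 1, T, hsym, hdiag => by
    have hcurry (w : E) : T.curryLeft w = 0 := by
      refine eq_zero_of_symm_of_diag _ (fun σ x => ?_) fun v => ?_
      · simp only [curryLeft_apply, ← Fin.cons_comp_decomposeFin_symm, hsym]
      · rw [curryLeft_apply, ← map_update_const_eq_zero T hsym hdiag 0 v w]
        congr 1
        ext j
        cases j using Fin.cases <;> simp
    ext x
    rw [← Fin.cons_self_tail x, ← curryLeft_apply, hcurry]
    rfl

end Polarization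


theorem map_const_eq_zero_of_norm_eq_one {ι E F : Type*} [Fintype ι] [Nonempty ι]
    [NormedAddCommGroup E] [NormedSpace ℝ E] [AddCommGroup F] [Module ℝ F]
    (T : MultilinearMap ℝ (fun _ : ι => E) F) (h : ∀ Y : E, ‖Y‖ = 1 → T (fun _ => Y) = 0)
    (v : E) : T (fun _ => v) = 0 := by
  rcases eq_or_ne v 0 with rfl | hv
  · exact T.map_zero
  have hunit := h (‖v‖⁻¹ • v) (norm_smul_inv_norm hv)
  rw [T.map_smul_univ (fun _ => ‖v‖⁻¹) fun _ => v, smul_eq_zero] at hunit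
  exact hunit.resolve_left (prod_ne_zero_iff.mpr fun _ _ => by simpa using hv)

end MultilinearMap

theorem LinearMap.surjective_id_add_smul_smulRight_innerₗ {E : Type*} [NormedAddCommGroup E]
    [InnerProductSpace ℝ E] [FiniteDimensional ℝ E] {c : ℝ} {η : E} (hc : 1 + c * ‖η‖ ^ 2 ≠ 0) :
    Function.Surjective (LinearMap.id + c • (innerₗ E η).smulRight η : E →ₗ[ℝ] E) := by
  refine LinearMap.injective_iff_surjective.mp <| (injective_iff_map_eq_zero _).mpr fun y hy => ?_
  simp only [add_apply, id_coe, id_eq, smul_apply, smulRight_apply, innerₗ_apply_apply] at hy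
  have hηy : ⟪η, y⟫ = 0 := by
    have := congrArg (⟪η, ·⟫) hy
    simp only [inner_add_right, inner_smul_right, real_inner_self_eq_norm_sq,
      inner_zero_right] at this
    have hfactor : ⟪η, y⟫ * (1 + c * ‖η‖ ^ 2) = 0 := by linear_combination this
    exact (mul_eq_zero.mp hfactor).resolve_right hc
  simpa [hηy] using hy

theorem stmt_4_general (n : ℕ) (ξF : ℝ)
    (ηF : EuclideanSpace ℝ (Fin (n-1)))
    (T : MultilinearMap ℝ (fun _ : Fin 4 => EuclideanSpace ℝ (Fin (n-1))) ℝ)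
    (hsym : ∀ (σ : Equiv.Perm (Fin 4)) (x : Fin 4 → EuclideanSpace ℝ (Fin (n-1))),
      T (x ∘ σ) = T x)
    (h : ∀ Y : EuclideanSpace ℝ (Fin (n-1)), ‖Y‖ = 1 →
      T (fun _ => ((ξF^2 + 1)⁻¹ * ⟪Y, ηF⟫) • ηF + Y) = 0) : T = 0 := by
  set L : EuclideanSpace ℝ (Fin (n-1)) →ₗ[ℝ] EuclideanSpace ℝ (Fin (n-1)) :=
    LinearMap.id + (ξF ^ 2 + 1)⁻¹ • (innerₗ _ ηF).smulRight ηF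
  have hL : Function.Surjective L :=
    LinearMap.surjective_id_add_smul_smulRight_innerₗ (by positivity)
  refine T.eq_zero_of_symm_of_diag hsym fun v => ?_
  obtain ⟨y, rfl⟩ := hL v
  refine (T.compLinearMap fun _ => L).map_const_eq_zero_of_norm_eq_one (fun Y hY => ?_) y
  simpa [L, real_inner_comm, add_comm, mul_smul] using h Y hY

/-- Semiclassical ellipticity computation of Lemma 2.3: contraction of a
symmetric 4-tensor with the fourth power of `(ξ_F²+1)⁻¹ (Ŷ·η_F) η_F + Ŷ`
over all unit vectors `Ŷ` forces the tensor to vanish. -/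
theorem stmt_4 (n : ℕ) (hn : 3 ≤ n) (ξF : ℝ)
    (ηF : EuclideanSpace ℝ (Fin (n-1))) (hη : ηF ≠ 0)
    (T : MultilinearMap ℝ (fun _ : Fin 4 => EuclideanSpace ℝ (Fin (n-1))) ℝ)
    (hsym : ∀ (σ : Equiv.Perm (Fin 4)) (x : Fin 4 → EuclideanSpace ℝ (Fin (n-1))),
      T (x ∘ σ) = T x)
    (h : ∀ Y : EuclideanSpace ℝ (Fin (n-1)), ‖Y‖ = 1 →
      T (fun _ => ((ξF^2 + 1)⁻¹ * ⟪Y, ηF⟫) • ηF + Y) = 0) : T = 0 :=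
  stmt_4_general n ξF ηF T hsym h
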